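/- arXiv:1803.11034 — 4 statements merged into one kernel-verified Lean document; each statement's English description precedes it below -/
import Mathlib

section
/- Let P be a reduction of a distribution Δ of Σ, let Δ' ∈ P, and suppose that Δ' itself has a reduction P'. Then [(P − {Δ'}) ∪ P'] is also a reduction of Δ. -/
/-- A *distribution* of the (finite) alphabet `α`: a family of non-empty,
pairwise incomparable (under set inclusion) sub-alphabets whose union is `α`.
Its size is `comps.ncard`. -/
structure Distr (α : Type) [Fintype α] where
  comps : Set (Set α)
  comps_nonempty : ∀ S ∈ comps, S.Nonempty
  comps_cover : ∀ a : α, ∃ S ∈ comps, a ∈ S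
  comps_incomp : ∀ S ∈ comps, ∀ T ∈ comps, S ≠ T → ¬ S ⊆ T

section Defs

variable {α : Type} [Fintype α]

/-- Natural projection `P_{Σ'}`: erase from a string all symbols not in `S`. -/
noncomputable def projA (S : Set α) (s : List α) : List α :=
  s.filter fun a => @decide (a ∈ S) (Classical.propDecidable _)

/-- `L` is decomposable with respect to `Δ`:
`L = ∥_i P_{Σ_i}(L) = ⋂_i P_{Σ_i}⁻¹(P_{Σ_i}(L))`. -/
def Decomposable (L : Set (List α)) (Δ : Distr α) : Prop :=
  L = ⋂ S ∈ Δ.comps, projA S ⁻¹' (projA S '' L)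

/-- The partial order `≤_Σ` on distributions: every component of `Δ` is
contained in some component of `Δ'`. -/
def DistLE (Δ Δ' : Distr α) : Prop :=
  ∀ S ∈ Δ.comps, ∃ T ∈ Δ'.comps, S ⊆ T

/-- `P` is a *reduction* of `Δ`. -/
def IsReduction (P : Set (Distr α)) (Δ : Distr α) : Prop :=
  2 ≤ P.ncard ∧
  (∀ Δ' ∈ P, Δ'.comps.ncard < Δ.comps.ncard) ∧
  (∀ L : Set (List α), Decomposable L Δ ↔ ∀ Δ' ∈ P, Decomposable L Δ')

/-- The maximal members (under set inclusion) of a family of sets. -/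
def MaximalMem {β : Type} (F : Set (Set β)) : Set (Set β) :=
  {S | S ∈ F ∧ ∀ T ∈ F, S ⊆ T → S = T}

/-- The dependence relation `D_Δ`. -/
def DepRel (Δ : Distr α) : Set (α × α) :=
  {p | ∃ S ∈ Δ.comps, p.1 ∈ S ∧ p.2 ∈ S}

/-- The independence relation `I_Δ = Σ × Σ − D_Δ`. -/
def IndepRel (Δ : Distr α) : Set (α × α) :=
  {p | ¬ ∃ S ∈ Δ.comps, p.1 ∈ S ∧ p.2 ∈ S}

/-- `Σ' ⊑ Δ`: `Σ'` is contained in some component of `Δ`. -/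
def SqSub (S : Set α) (Δ : Distr α) : Prop :=
  ∃ T ∈ Δ.comps, S ⊆ T

/-- `Δ` is the greatest lower bound of the family `D` with respect to `≤_Σ`. -/
def IsGLBFam {l : ℕ} (D : Fin l → Distr α) (Δ : Distr α) : Prop :=
  (∀ i, DistLE Δ (D i)) ∧
  ∀ Δ''' : Distr α, (∀ i, DistLE Δ''' (D i)) → DistLE Δ''' Δ

/-- `Δ'` is *merged* from `Δ`: `Δ' ≠ (Σ)` and `Δ'` is obtained from a
partition of the components of `Δ` having at least one block of size ≥ 2 by
taking the unions over the blocks and keeping only the maximal resulting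
sub-alphabets. -/
def MergedFrom (Δ' Δ : Distr α) : Prop :=
  Δ'.comps ≠ {Set.univ} ∧
  ∃ part : Set (Set (Set α)),
    (∀ B ∈ part, B.Nonempty) ∧
    (∀ B ∈ part, B ⊆ Δ.comps) ∧
    (∀ B ∈ part, ∀ C ∈ part, B ≠ C → Disjoint B C) ∧
    (∀ S ∈ Δ.comps, ∃ B ∈ part, S ∈ B) ∧
    (∃ B ∈ part, ∃ S ∈ B, ∃ T ∈ B, S ≠ T) ∧
    Δ'.comps = MaximalMem {U : Set α | ∃ B ∈ part, U = ⋃₀ B}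

/-- Membership in the search space `S_Δ`: a set of distributions merged from
`Δ` that are pairwise `≤_Σ`-incomparable. -/
def MemS (Δ : Distr α) (P : Set (Distr α)) : Prop :=
  (∀ Δ' ∈ P, MergedFrom Δ' Δ) ∧
  ∀ Δ₁ ∈ P, ∀ Δ₂ ∈ P, Δ₁ ≠ Δ₂ → ¬ DistLE Δ₁ Δ₂

/-- The ordering `≤_Δ` on sets of distributions: every member of `Q` has a
member of `P` below it with respect to `≤_Σ`. -/
def SetLE (P Q : Set (Distr α)) : Prop :=
  ∀ Δ' ∈ Q, ∃ Δ'' ∈ P, DistLE Δ'' Δ'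

/-- `[F]`: the `≤_Σ`-minimal members of a set of distributions. -/
def MinimalD (F : Set (Distr α)) : Set (Distr α) :=
  {Δ' | Δ' ∈ F ∧ ∀ Δ'' ∈ F, DistLE Δ'' Δ' → DistLE Δ' Δ''}

/-- `Δ'` is obtained from `Δ` by merging exactly two components `S ≠ T`
(and keeping only the maximal sub-alphabets); the members of `⊥(Δ)`. -/
def MinMergedFrom (Δ' Δ : Distr α) : Prop :=
  ∃ S ∈ Δ.comps, ∃ T ∈ Δ.comps, S ≠ T ∧
    Δ'.comps = MaximalMem ((Δ.comps \ {S, T}) ∪ {S ∪ T})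

/-- The set `A(Δ)` of shared symbols of a distribution. -/
def SharedSyms (Δ : Distr α) : Set α :=
  {a | ∃ S ∈ Δ.comps, ∃ T ∈ Δ.comps, S ≠ T ∧ a ∈ S ∧ a ∈ T}

/-- The substitution of `Δ'` into the component `C` of `Δ''` yields `Δs`:
`Δs` is obtained from the components of `Δ''` other than `C` together with the
intersections `C ∩ S` for components `S` of `Δ'`, keeping only the maximal
non-empty members. -/
def SubstResult (Δ' Δ'' : Distr α) (C : Set α) (Δs : Distr α) : Prop :=
  Δs.comps =
    MaximalMem {T : Set α |
      T.Nonempty ∧ (T ∈ Δ''.comps \ {C} ∨ ∃ S ∈ Δ'.comps, T = C ∩ S)}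

/-- One swap of two adjacent symbols forming a pair in `I`. -/
def SwapStep (I : Set (α × α)) (s t : List α) : Prop :=
  ∃ (u v : List α) (a b : α),
    (a, b) ∈ I ∧ s = u ++ a :: b :: v ∧ t = u ++ b :: a :: v

/-- Trace equivalence with respect to `I`: a finite sequence of swaps of
adjacent independent symbols. -/
def TraceEquiv (I : Set (α × α)) : List α → List α → Prop :=
  Relation.ReflTransGen (SwapStep I)

/-- `L` is trace-closed with respect to `I`. -/
def TraceClosed (I : Set (α × α)) (L : Set (List α)) : Prop :=
  L = {t | ∃ s ∈ L, TraceEquiv I s t}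

/-- The map `N` determined by the enumeration `c` of the components of a
distribution: `N(a) = {i : a ∉ Σ_i}`. -/
def Nmap {n : ℕ} (c : Fin n → Set α) (a : α) : Set (Fin n) :=
  {i | a ∉ c i}

/-- A simple path from `x` to `y` in the graph `(Σ, D)`: a list of pairwise
distinct symbols, starting at `x`, ending at `y`, with consecutive symbols
related by `D`. -/
def IsSimplePath (D : Set (α × α)) (p : List α) (x y : α) : Prop :=
  p.Nodup ∧ p.head? = some x ∧ p.getLast? = some y ∧
    p.Chain' (fun a b => (a, b) ∈ D)

/-- `Cr_D(S, y)` (with `N` given by the enumeration `c`): the set of indices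
`i` such that some simple path `p` from some `x ∈ S` to `y` in `(Σ, D)`
satisfies `i ∈ ⋂_{a ∈ p.dropLast} N(a)`. -/
def CrSet {n : ℕ} (c : Fin n → Set α) (D : Set (α × α)) (S : Set α) (y : α) :
    Set (Fin n) :=
  {i | ∃ x ∈ S, ∃ p : List α,
    IsSimplePath D p x y ∧ ∀ a ∈ p.dropLast, i ∈ Nmap c a}

/-- The smallest set of distributions containing `Q` and closed under
substitution. -/
inductive SubstClosure (Q : Set (Distr α)) : Distr α → Prop
  | base (Δ' : Distr α) (h : Δ' ∈ Q) : SubstClosure Q Δ'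
  | step (Δ' Δ'' Δs : Distr α) (C : Set α)
      (h1 : SubstClosure Q Δ') (h2 : SubstClosure Q Δ'')
      (hC : C ∈ Δ''.comps) (hA : SharedSyms Δ' ⊆ C)
      (hs : SubstResult Δ' Δ'' C Δs) : SubstClosure Q Δs

end Defs

section Count

variable {α : Type} [Fintype α] [DecidableEq α]

/-- `L(Σ_j)` (with `j` 0-indexed, so the paper's exponent `j+1` is `j+2`
here): all strings containing exactly one occurrence of each `σ_i ∈ Σ_j` and
exactly `j+2` occurrences of each `σ_i ∉ Σ_j`. -/
def Lword {m : ℕ} (σ : Fin m → α) (Sj : Set α) (j : ℕ) : Set (List α) :=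
  {s | ∀ i : Fin m,
    (σ i ∈ Sj → s.count (σ i) = 1) ∧ (σ i ∉ Sj → s.count (σ i) = j + 2)}

/-- The candidate counter example `L_cand = ⋃_j L(Σ_j)`, relative to an
enumeration `c` of the components and an enumeration `σ` of the alphabet. -/
def Lcand {n m : ℕ} (c : Fin n → Set α) (σ : Fin m → α) : Set (List α) :=
  ⋃ j : Fin n, Lword σ (c j) (j : ℕ)

end Count

section AuxProofs

variable {α : Type} [Fintype α]

/-- The closure operator associated to a distribution. -/
private def clD (Δ : Distr α) (L : Set (List α)) : Set (List α) :=
  ⋂ S ∈ Δ.comps, projA S ⁻¹' (projA S '' L)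

private lemma decomposable_iff_clD {L : Set (List α)} {Δ : Distr α} :
    Decomposable L Δ ↔ L = clD Δ L := Iff.rfl

private lemma mem_clD {Δ : Distr α} {L : Set (List α)} {s : List α} :
    s ∈ clD Δ L ↔ ∀ S ∈ Δ.comps, projA S s ∈ projA S '' L := by
  simp [clD]

private lemma subset_clD (Δ : Distr α) (L : Set (List α)) : L ⊆ clD Δ L := by
  intro s hs
  rw [mem_clD]
  intro S _
  exact ⟨s, hs, rfl⟩

private lemma clD_decomposable (Δ : Distr α) (L : Set (List α)) :
    Decomposable (clD Δ L) Δ := by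
  rw [decomposable_iff_clD]
  refine Set.Subset.antisymm (subset_clD _ _) ?_
  intro s hs
  rw [mem_clD] at hs ⊢
  intro S hS
  obtain ⟨t, ht, hpt⟩ := hs S hS
  rw [mem_clD] at ht
  obtain ⟨l, hl, hpl⟩ := ht S hS
  exact ⟨l, hl, by rw [hpl, hpt]⟩

private lemma projA_singleton_mem {S : Set α} {x : α} (hx : x ∈ S) :
    projA S [x] = [x] := by
  have hd : @decide (x ∈ S) (Classical.propDecidable _) = true := @decide_eq_true _ (Classical.propDecidable _) hx
  simp only [projA, List.filter_cons, List.filter_nil, hd]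
  simp

private lemma projA_singleton_not_mem {S : Set α} {x : α} (hx : x ∉ S) :
    projA S [x] = [] := by
  have hd : @decide (x ∈ S) (Classical.propDecidable _) = false := @decide_eq_false _ (Classical.propDecidable _) hx
  simp only [projA, List.filter_cons, List.filter_nil, hd]
  simp

private lemma projA_nil (S : Set α) : projA S [] = [] := rfl

private lemma projA_projA {S T : Set α} (h : S ⊆ T) (u : List α) :
    projA S (projA T u) = projA S u := by
  simp only [projA]
  rw [List.filter_filter]
  apply List.filter_congr
  intro a _
  by_cases ha : a ∈ S
  · have h1 : @decide (a ∈ S) (Classical.propDecidable _) = true := @decide_eq_true _ (Classical.propDecidable _) ha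
    have h2 : @decide (a ∈ T) (Classical.propDecidable _) = true := @decide_eq_true _ (Classical.propDecidable _) (h ha)
    rw [h1, h2]
    rfl
  · have h1 : @decide (a ∈ S) (Classical.propDecidable _) = false := @decide_eq_false _ (Classical.propDecidable _) ha
    rw [h1]
    simp

private lemma distle_refl (Δ : Distr α) : DistLE Δ Δ :=
  fun S hS => ⟨S, hS, subset_rfl⟩

private lemma distle_trans {Δ₁ Δ₂ Δ₃ : Distr α}
    (h12 : DistLE Δ₁ Δ₂) (h23 : DistLE Δ₂ Δ₃) : DistLE Δ₁ Δ₃ := by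
  intro S hS
  obtain ⟨T, hT, hST⟩ := h12 S hS
  obtain ⟨U, hU, hTU⟩ := h23 T hT
  exact ⟨U, hU, hST.trans hTU⟩

/-- Monotonicity: if `Δ₁ ≤ Δ₂` and `L` is decomposable w.r.t. `Δ₁`, then it
is decomposable w.r.t. `Δ₂`. -/
private lemma dec_mono {Δ₁ Δ₂ : Distr α} (h : DistLE Δ₁ Δ₂)
    {L : Set (List α)} (hL : Decomposable L Δ₁) : Decomposable L Δ₂ := by
  rw [decomposable_iff_clD] at hL ⊢
  refine Set.Subset.antisymm (subset_clD _ _) ?_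
  intro s hs
  rw [mem_clD] at hs
  rw [hL, mem_clD]
  intro S hS
  obtain ⟨T, hT, hST⟩ := h S hS
  obtain ⟨l, hl, hpl⟩ := hs T hT
  refine ⟨l, hl, ?_⟩
  rw [← projA_projA hST l, hpl, projA_projA hST s]

/-- If every `Δ₂`-decomposable language is `Δ₁`-decomposable, then
`Δ₂ ≤ Δ₁`. -/
private lemma le_of_dec_subset {Δ₂ Δ₁ : Distr α}
    (h : ∀ L, Decomposable L Δ₂ → Decomposable L Δ₁) : DistLE Δ₂ Δ₁ := by
  intro T hT
  by_contra hc
  push_neg at hc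
  have hc' : ∀ S ∈ Δ₁.comps, ¬ T ⊆ S := hc
  -- counterexample language
  set M : Set (List α) := {l | ∃ x ∈ T, l = [x]} with hM
  have hdec := h (clD Δ₂ M) (clD_decomposable Δ₂ M)
  have hnil_not : ([] : List α) ∉ clD Δ₂ M := by
    rw [mem_clD]
    push_neg
    refine ⟨T, hT, ?_⟩
    rintro ⟨l, ⟨x, hx, rfl⟩, hp⟩
    rw [projA_singleton_mem hx, projA_nil] at hp
    exact List.cons_ne_nil x [] hp
  have hnil : ([] : List α) ∈ clD Δ₁ (clD Δ₂ M) := by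
    rw [mem_clD]
    intro S hS
    obtain ⟨x, hx, hxS⟩ := Set.not_subset.mp (hc' S hS)
    refine ⟨[x], subset_clD _ _ ⟨x, hx, rfl⟩, ?_⟩
    rw [projA_singleton_not_mem hxS, projA_nil]
  rw [decomposable_iff_clD] at hdec
  rw [← hdec] at hnil
  exact hnil_not hnil

/-- Mutual `≤` implies equality of the component sets. -/
private lemma comps_subset_of_mutual {Δ₁ Δ₂ : Distr α}
    (h12 : DistLE Δ₁ Δ₂) (h21 : DistLE Δ₂ Δ₁) : Δ₁.comps ⊆ Δ₂.comps := by
  intro S hS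
  obtain ⟨T, hT, hST⟩ := h12 S hS
  obtain ⟨S', hS', hTS'⟩ := h21 T hT
  have hSS' : S ⊆ S' := hST.trans hTS'
  by_cases heq : S = S'
  · subst heq
    have : S = T := Set.Subset.antisymm hST hTS'
    rwa [this]
  · exact absurd hSS' (Δ₁.comps_incomp S hS S' hS' heq)

/-- Every member of a finite set of distributions has a `MinimalD` member
below it. -/
private lemma exists_minimal_below {U : Set (Distr α)} (hU : U.Finite)
    {x : Distr α} (hx : x ∈ U) : ∃ m ∈ MinimalD U, DistLE m x := by
  haveI := hU.to_subtype
  let r : U → U → Prop := fun a b => DistLE a.1 b.1 ∧ ¬ DistLE b.1 a.1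
  haveI : IsTrans U r :=
    ⟨fun a b c hab hbc =>
      ⟨distle_trans hab.1 hbc.1, fun h => hbc.2 (distle_trans h hab.1)⟩⟩
  haveI : IsIrrefl U r := ⟨fun a ha => ha.2 ha.1⟩
  have hwf : WellFounded r := Finite.wellFounded_of_trans_of_irrefl r
  obtain ⟨m, hm, hmin⟩ := hwf.has_min {a : U | DistLE a.1 x}
    ⟨⟨x, hx⟩, distle_refl x⟩
  refine ⟨m.1, ⟨m.2, ?_⟩, hm⟩
  intro z hz hzm
  by_contra hmz
  exact hmin ⟨z, hz⟩ (distle_trans hzm hm) ⟨hzm, hmz⟩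

private lemma finite_of_two_le_ncard {U : Set (Distr α)} (h : 2 ≤ U.ncard) :
    U.Finite := by
  by_contra hinf
  rw [Set.Infinite.ncard hinf] at h
  omega

end AuxProofs

/-- If `P` is a reduction of `Δ`, `Δ' ∈ P`, and `P'` is a
reduction of `Δ'`, then `[(P − {Δ'}) ∪ P']` is also a reduction of `Δ`. -/
theorem statement_12 {α : Type} [Fintype α] (Δ Δ' : Distr α)
    (P P' : Set (Distr α))
    (hP : IsReduction P Δ) (hmem : Δ' ∈ P) (hP' : IsReduction P' Δ') :
    IsReduction (MinimalD ((P \ {Δ'}) ∪ P')) Δ := by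
  obtain ⟨hPc, hPlt, hPdec⟩ := hP
  obtain ⟨hP'c, hP'lt, hP'dec⟩ := hP'
  set U : Set (Distr α) := (P \ {Δ'}) ∪ P' with hUdef
  have hPfin : P.Finite := finite_of_two_le_ncard hPc
  have hP'fin : P'.Finite := finite_of_two_le_ncard hP'c
  have hUfin : U.Finite := (hPfin.subset Set.diff_subset).union hP'fin
  have hUne : U.Nonempty := by
    obtain ⟨x, hx⟩ := Set.nonempty_of_ncard_ne_zero (by omega : P'.ncard ≠ 0)
    exact ⟨x, Or.inr hx⟩
  -- sizes
  have hsize : ∀ x ∈ U, x.comps.ncard < Δ.comps.ncard := by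
    rintro x (⟨hxP, _⟩ | hxP')
    · exact hPlt x hxP
    · exact (hP'lt x hxP').trans (hPlt Δ' hmem)
  -- forward: decomposable w.r.t. Δ implies decomposable w.r.t. every
  -- member of U
  have fwd : ∀ L, Decomposable L Δ → ∀ x ∈ U, Decomposable L x := by
    rintro L hL x (⟨hxP, _⟩ | hxP')
    · exact (hPdec L).mp hL x hxP
    · exact (hP'dec L).mp ((hPdec L).mp hL Δ' hmem) x hxP'
  -- backward: decomposable w.r.t. every member of U implies
  -- decomposable w.r.t. Δ
  have bwd : ∀ L, (∀ x ∈ U, Decomposable L x) → Decomposable L Δ := by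
    intro L hall
    apply (hPdec L).mpr
    intro x hxP
    by_cases hx : x = Δ'
    · subst hx
      apply (hP'dec L).mpr
      intro y hy
      exact hall y (Or.inr hy)
    · exact hall x (Or.inl ⟨hxP, hx⟩)
  have hMU : MinimalD U ⊆ U := fun m hm => hm.1
  -- the decomposability equivalence for the minimal set
  have hdecM : ∀ L : Set (List α),
      Decomposable L Δ ↔ ∀ Δ'' ∈ MinimalD U, Decomposable L Δ'' := by
    intro L
    constructor
    · intro hL m hm
      exact fwd L hL m (hMU hm)
    · intro hall
      apply bwd
      intro x hx
      obtain ⟨m, hm, hmx⟩ := exists_minimal_below hUfin hx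
      exact dec_mono hmx (hall m hm)
  -- cardinality of the minimal set
  have hMfin : (MinimalD U).Finite := hUfin.subset hMU
  have hMne : (MinimalD U).Nonempty := by
    obtain ⟨x, hx⟩ := hUne
    obtain ⟨m, hm, _⟩ := exists_minimal_below hUfin hx
    exact ⟨m, hm⟩
  have hcard : 2 ≤ (MinimalD U).ncard := by
    by_contra hlt
    push_neg at hlt
    -- then MinimalD U is a singleton {Δ₀}
    obtain ⟨Δ₀, hΔ₀⟩ := hMne
    have huniq : ∀ m ∈ MinimalD U, m = Δ₀ := by
      intro m hm
      by_contra hne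
      have : 1 < (MinimalD U).ncard :=
        (Set.one_lt_ncard hMfin).mpr ⟨m, hm, Δ₀, hΔ₀, hne⟩
      omega
    have hle : ∀ x ∈ U, DistLE Δ₀ x := by
      intro x hx
      obtain ⟨m, hm, hmx⟩ := exists_minimal_below hUfin hx
      rwa [huniq m hm] at hmx
    -- Δ and Δ₀ have the same decomposable languages
    have hequiv : ∀ L : Set (List α), Decomposable L Δ ↔ Decomposable L Δ₀ := by
      intro L
      constructor
      · intro hL
        exact fwd L hL Δ₀ (hMU hΔ₀)
      · intro hL
        apply bwd
        intro x hx
        exact dec_mono (hle x hx) hL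
    have h1 : DistLE Δ Δ₀ := le_of_dec_subset (fun L h => (hequiv L).mp h)
    have h2 : DistLE Δ₀ Δ := le_of_dec_subset (fun L h => (hequiv L).mpr h)
    have hcomps : Δ.comps = Δ₀.comps :=
      Set.Subset.antisymm (comps_subset_of_mutual h1 h2)
        (comps_subset_of_mutual h2 h1)
    have := hsize Δ₀ (hMU hΔ₀)
    rw [hcomps] at this
    omega
  exact ⟨hcard, fun x hx => hsize x (hMU hx), hdecM⟩
end

section
/- If {Δ_1, …, Δ_l} is a reduction of a distribution Δ of Σ, then Δ ≤_Σ Δ_i for every i ∈ [1, l]. -/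
/-!
If a component `S` of `Δ` lies in no component of `Δ'`, the language of words containing a
letter of `S` separates the two distributions. It is the inverse image under `P_S` of a language
over `S`, hence decomposable with respect to `Δ`. It is not decomposable with respect to `Δ'`:
the empty word is not in it, yet for every component `T` of `Δ'` it has the same projection to `T`
as a one-letter word `a` with `a ∈ S \ T`, which is.
-/

section Separation

variable {α : Type}

theorem projA_singleton_of_mem {S : Set α} {a : α} (ha : a ∈ S) : projA S [a] = [a] := by
  simp [projA, ha]

theorem projA_singleton_of_not_mem {S : Set α} {a : α} (ha : a ∉ S) : projA S [a] = [] := by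
  simp [projA, ha]

variable [Fintype α]

theorem decomposable_preimage_projA {Δ : Distr α} {S : Set α} (hS : S ∈ Δ.comps)
    (K : Set (List α)) : Decomposable (projA S ⁻¹' K) Δ := by
  refine subset_antisymm (fun w hw =>
    Set.mem_iInter₂.mpr fun U _ => Set.mem_preimage.mpr (Set.mem_image_of_mem (projA U) hw)) ?_
  intro w hw
  obtain ⟨v, hv, hvw⟩ := Set.mem_iInter₂.mp hw S hS
  rwa [Set.mem_preimage, ← hvw]

theorem not_decomposable_preimage_projA_ne_nil {Δ : Distr α} {S : Set α} (hS : ¬ SqSub S Δ) :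
    ¬ Decomposable (projA S ⁻¹' {[]}ᶜ) Δ := by
  intro hdec
  have hnil : [] ∉ projA S ⁻¹' {[]}ᶜ := fun h => h rfl
  refine hnil (hdec ▸ Set.mem_iInter₂.mpr fun T hT => ?_)
  obtain ⟨a, haS, haT⟩ := Set.not_subset.mp fun hST => hS ⟨T, hT, hST⟩
  refine ⟨[a], ?_, projA_singleton_of_not_mem haT⟩
  simp [projA_singleton_of_mem haS]

theorem distLE_of_forall_decomposable {Δ Δ' : Distr α}
    (h : ∀ L : Set (List α), Decomposable L Δ → Decomposable L Δ') : DistLE Δ Δ' := by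
  intro S hS
  by_contra hSΔ'
  exact not_decomposable_preimage_projA_ne_nil hSΔ' (h _ (decomposable_preimage_projA hS _))

end Separation

/-- If `P` is a reduction of `Δ`, then `Δ ≤_Σ Δ_i` for every
`Δ_i ∈ P`. -/
theorem statement_15 {α : Type} [Fintype α] (Δ : Distr α) (P : Set (Distr α))
    (h : IsReduction P Δ) :
    ∀ Δi ∈ P, DistLE Δ Δi :=
  fun Δi hΔi => distLE_of_forall_decomposable fun L hL => (h.2.2 L).mp hL Δi hΔi
end

section
/- If {Δ_1, …, Δ_l} is a reduction of a distribution Δ of Σ, then I_Δ = ⋃_{i=1}^l I_{Δ_i} (equivalently, D_Δ = ⋂_{i=1}^l D_{Δ_i}). -/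
/-! The two-letter language `{ab}` is decomposable with respect to a distribution exactly
when `a` and `b` share a component: if they do not, every projection of `ba` equals the
projection of `ab`, so `ba` lies in the synchronous product. Hence condition (1) of a
reduction, applied to these languages, identifies `D_Δ` with `⋂ D_{Δ_i}`, and `I_Δ` is its
complement. -/

section Projection

variable {α : Type}

lemma mem_projA {S : Set α} {x : α} {l : List α} : x ∈ projA S l ↔ x ∈ l ∧ x ∈ S := by
  simp [projA]

lemma projA_eq_self {S : Set α} {l : List α} (h : ∀ x ∈ l, x ∈ S) : projA S l = l :=
  List.filter_eq_self.mpr fun x hx => by simpa using h x hx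

lemma projA_pair_swap {S : Set α} {a b : α} (h : ¬ (a ∈ S ∧ b ∈ S)) :
    projA S [b, a] = projA S [a, b] := by
  by_cases ha : a ∈ S <;> by_cases hb : b ∈ S <;> simp_all [projA]

variable [Fintype α]

lemma subset_syncProduct (L : Set (List α)) (Δ : Distr α) :
    L ⊆ ⋂ S ∈ Δ.comps, projA S ⁻¹' (projA S '' L) :=
  fun s hs => Set.mem_iInter₂.mpr fun _ _ => ⟨s, hs, rfl⟩

lemma exists_mem_of_mem_syncProduct {L : Set (List α)} {Δ : Distr α} {s : List α}
    (hs : s ∈ ⋂ S ∈ Δ.comps, projA S ⁻¹' (projA S '' L)) {x : α} (hx : x ∈ s) :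
    ∃ t ∈ L, x ∈ t := by
  obtain ⟨S, hS, hxS⟩ := Δ.comps_cover x
  obtain ⟨t, ht, hts⟩ := Set.mem_iInter₂.mp hs S hS
  exact ⟨t, ht, (mem_projA.mp (hts ▸ mem_projA.mpr ⟨hx, hxS⟩)).1⟩

end Projection

section DepRel

variable {α : Type} [Fintype α]

lemma indepRel_eq_compl (Δ : Distr α) : IndepRel Δ = (DepRel Δ)ᶜ := rfl

lemma mem_depRel_of_decomposable_pair {Δ : Distr α} {a b : α}
    (hd : Decomposable {[a, b]} Δ) : (a, b) ∈ DepRel Δ := by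
  by_contra hab
  have hba : [b, a] ∈ ⋂ S ∈ Δ.comps, projA S ⁻¹' (projA S '' {[a, b]}) :=
    Set.mem_iInter₂.mpr fun S hS =>
      ⟨[a, b], rfl, (projA_pair_swap fun h => hab ⟨S, hS, h⟩).symm⟩
  rw [← hd] at hba
  obtain ⟨hba, -⟩ : b = a ∧ a = b := by simpa using hba
  obtain ⟨S, hS, haS⟩ := Δ.comps_cover a
  exact hab ⟨S, hS, haS, hba ▸ haS⟩

lemma decomposable_pair_of_mem_depRel {Δ : Distr α} {a b : α}
    (hab : (a, b) ∈ DepRel Δ) : Decomposable {[a, b]} Δ := by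
  obtain ⟨S, hS, haS, hbS⟩ := hab
  refine (subset_syncProduct _ Δ).antisymm fun s hs => ?_
  have hsS : ∀ x ∈ s, x ∈ S := fun x hx => by
    obtain ⟨t, rfl, hxt⟩ := exists_mem_of_mem_syncProduct hs hx
    simp only [List.mem_cons, List.not_mem_nil, or_false] at hxt
    rcases hxt with rfl | rfl <;> assumption
  obtain ⟨t, rfl, hts⟩ := Set.mem_iInter₂.mp hs S hS
  have hpair : ∀ x ∈ [a, b], x ∈ S := by simp [haS, hbS]
  rw [projA_eq_self hpair, projA_eq_self hsS] at hts
  exact hts.symm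

lemma decomposable_pair_iff (Δ : Distr α) (a b : α) :
    Decomposable {[a, b]} Δ ↔ (a, b) ∈ DepRel Δ :=
  ⟨mem_depRel_of_decomposable_pair, decomposable_pair_of_mem_depRel⟩

lemma depRel_eq_iInter_of_decomposable_iff {Δ : Distr α} {P : Set (Distr α)}
    (hP : ∀ L : Set (List α), Decomposable L Δ ↔ ∀ Δ' ∈ P, Decomposable L Δ') :
    DepRel Δ = ⋂ Δ' ∈ P, DepRel Δ' := by
  ext ⟨a, b⟩
  simp only [Set.mem_iInter, ← decomposable_pair_iff, hP]

end DepRel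

/-- If `P` is a reduction of `Δ`, then
`I_Δ = ⋃_{Δ' ∈ P} I_{Δ'}` (equivalently, `D_Δ = ⋂_{Δ' ∈ P} D_{Δ'}`). -/
theorem statement_16 {α : Type} [Fintype α] (Δ : Distr α) (P : Set (Distr α))
    (h : IsReduction P Δ) :
    (IndepRel Δ = ⋃ Δ' ∈ P, IndepRel Δ') ∧
    (DepRel Δ = ⋂ Δ' ∈ P, DepRel Δ') := by
  have hDep := depRel_eq_iInter_of_decomposable_iff h.2.2
  refine ⟨?_, hDep⟩
  simp only [indepRel_eq_compl, hDep, Set.compl_iInter₂]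
end

section
/- Let Δ be a distribution of Σ and let P, Q ∈ S_Δ with |P| ≥ 2. If P ≤_Δ Q and Q is a reduction of Δ, then P is also a reduction of Δ. -/
/-!
Decomposability is inherited upwards along `≤_Σ`: a component of the finer distribution sits
inside a component of the coarser one, and projecting further commutes with that inclusion.
Merged distributions lie above `Δ`, so decomposability with respect to `Δ` gives it with respect
to every member of `P`; conversely, since every member of `Q` lies above a member of `P`,
decomposability with respect to all of `P` gives it with respect to all of `Q`, hence with respect
to `Δ` because `Q` is a reduction. Merging strictly decreases the number of components, since two
distinct components of `Δ` end up in the same block.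
-/

theorem projA_projA_of_subset {α : Type} {S T : Set α} (h : S ⊆ T) (s : List α) :
    projA S (projA T s) = projA S s := by
  unfold projA
  rw [List.filter_filter]
  refine List.filter_congr fun a _ => ?_
  by_cases hS : a ∈ S
  · simp [hS, h hS]
  · simp [hS]

theorem Set.ncard_image_lt_of_not_injOn {α β : Type} {f : α → β} {s : Set α}
    (hs : s.Finite) (hf : ¬ s.InjOn f) : (f '' s).ncard < s.ncard :=
  (Set.ncard_image_le hs).lt_of_ne fun h => hf (Set.injOn_of_ncard_image_eq h hs)

theorem exists_mem_maximalMem_superset {β : Type} {F : Set (Set β)} (hF : F.Finite)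
    {S : Set β} (hS : S ∈ F) : ∃ U ∈ MaximalMem F, S ⊆ U := by
  obtain ⟨U, hSU, hU⟩ := hF.exists_le_maximal hS
  exact ⟨U, ⟨hU.prop, fun V hV hUV => hU.eq_of_le hV hUV⟩, hSU⟩

section Distributions

variable {α : Type} [Fintype α]

theorem Decomposable.of_distLE {Δ Δ' : Distr α} (h : DistLE Δ Δ') {L : Set (List α)}
    (hL : Decomposable L Δ) : Decomposable L Δ' := by
  unfold Decomposable at hL ⊢
  refine subset_antisymm
    (fun w hw => Set.mem_iInter₂.mpr fun S _ => Set.mem_image_of_mem (projA S) hw) ?_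
  intro w hw
  rw [hL]
  refine Set.mem_iInter₂.mpr fun S hS => ?_
  obtain ⟨T, hT, hST⟩ := h S hS
  obtain ⟨u, hu, huw⟩ := Set.mem_iInter₂.mp hw T hT
  refine ⟨u, hu, ?_⟩
  rw [← projA_projA_of_subset hST u, huw, projA_projA_of_subset hST w]

namespace MergedFrom

variable {Δ' Δ : Distr α}

theorem distLE (h : MergedFrom Δ' Δ) : DistLE Δ Δ' := by
  obtain ⟨-, part, -, -, -, hcov, -, hcomps⟩ := h
  intro S hS
  obtain ⟨B, hB, hSB⟩ := hcov S hS
  have hB' : ⋃₀ B ∈ {U : Set α | ∃ B ∈ part, U = ⋃₀ B} := ⟨B, hB, rfl⟩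
  obtain ⟨U, hU, hBU⟩ := exists_mem_maximalMem_superset (Set.toFinite _) hB'
  exact ⟨U, hcomps ▸ hU, (Set.subset_sUnion_of_mem hSB).trans hBU⟩

theorem ncard_comps_lt (h : MergedFrom Δ' Δ) : Δ'.comps.ncard < Δ.comps.ncard := by
  obtain ⟨-, part, hne, hsub, hdisj, -, ⟨B₀, hB₀, S, hS, T, hT, hST⟩, hcomps⟩ := h
  -- `blockUnion S` is the union of the block containing `S`; blocks are disjoint, so it is well
  -- defined on the components of `Δ`.
  let blockUnion : Set α → Set α := fun S => {a | ∃ B ∈ part, S ∈ B ∧ a ∈ ⋃₀ B}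
  have blockUnion_eq : ∀ B ∈ part, ∀ S ∈ B, blockUnion S = ⋃₀ B := by
    intro B hB S hSB
    ext a
    refine ⟨fun ⟨B', hB', hSB', ha⟩ => ?_, fun ha => ⟨B, hB, hSB, ha⟩⟩
    by_cases hBB' : B' = B
    · exact hBB' ▸ ha
    · exact absurd hSB (Set.disjoint_left.mp (hdisj B' hB' B hB hBB') hSB')
  have hsubset : Δ'.comps ⊆ blockUnion '' Δ.comps := by
    intro U hU
    rw [hcomps] at hU
    obtain ⟨⟨B, hB, rfl⟩, -⟩ := hU
    obtain ⟨S, hSB⟩ := hne B hB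
    exact ⟨S, hsub B hB hSB, blockUnion_eq B hB S hSB⟩
  have hnot_inj : ¬ Δ.comps.InjOn blockUnion := fun hinj =>
    hST (hinj (hsub B₀ hB₀ hS) (hsub B₀ hB₀ hT)
      ((blockUnion_eq B₀ hB₀ S hS).trans (blockUnion_eq B₀ hB₀ T hT).symm))
  calc Δ'.comps.ncard ≤ (blockUnion '' Δ.comps).ncard := Set.ncard_le_ncard hsubset
    _ < Δ.comps.ncard := Set.ncard_image_lt_of_not_injOn (Set.toFinite _) hnot_inj

end MergedFrom

end Distributions

theorem statement_18_general {α : Type} [Fintype α] (Δ : Distr α)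
    (P Q : Set (Distr α))
    (hP : MemS Δ P) (hcard : 2 ≤ P.ncard)
    (hPQ : SetLE P Q) (hred : IsReduction Q Δ) :
    IsReduction P Δ := by
  refine ⟨hcard, fun Δ' hΔ' => (hP.1 Δ' hΔ').ncard_comps_lt, fun L => ⟨?_, ?_⟩⟩
  · exact fun hL Δ' hΔ' => hL.of_distLE (hP.1 Δ' hΔ').distLE
  · intro hL
    refine (hred.2.2 L).mpr fun Δ'' hΔ'' => ?_
    obtain ⟨Δ', hΔ'P, hle⟩ := hPQ Δ'' hΔ''
    exact (hL Δ' hΔ'P).of_distLE hle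

/-- For `P, Q ∈ S_Δ` with `|P| ≥ 2`, if `P ≤_Δ Q` and `Q`
is a reduction of `Δ`, then `P` is also a reduction of `Δ`. -/
theorem statement_18 {α : Type} [Fintype α] (Δ : Distr α)
    (P Q : Set (Distr α))
    (hP : MemS Δ P) (hQ : MemS Δ Q) (hcard : 2 ≤ P.ncard)
    (hPQ : SetLE P Q) (hred : IsReduction Q Δ) :
    IsReduction P Δ :=
  statement_18_general Δ P Q hP hcard hPQ hred
end
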